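/- arXiv:2605.27338 — 4 statements merged into one kernel-verified Lean document; each statement's English description precedes it below -/
import Mathlib

section
/- Let P be a coherent stratified propositional program with constraints, and let ¬P be obtained from P by replacing each constraint ':- l1,...,ln' with the rule 'v :- l1,...,ln' for a fresh atom v, and adding the constraint ':- not v'. Then ¬P is coherent if and only if P is incoherent. -/
open Classical

/-- A propositional normal rule: optional head (none = constraint),
positive body atoms and (default-)negated body atoms. -/
structure ARule (α : Type) where
  head : Option α
  pos : Set α
  neg : Set α

/-- A propositional normal logic program. -/
abbrev AProgram (α : Type) := Set (ARule α)

namespace ASP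

variable {α : Type}

def ARule.headSet (r : ARule α) : Set α := {a | r.head = some a}

def ARule.atoms (r : ARule α) : Set α := ARule.headSet r ∪ r.pos ∪ r.neg

def progAtoms (P : AProgram α) : Set α := ⋃ r ∈ P, ARule.atoms r

def heads (P : AProgram α) : Set α := {a | ∃ r ∈ P, r.head = some a}

/-- The body of a rule is true in interpretation `I`. -/
def bodyTrue (I : Set α) (r : ARule α) : Prop :=
  r.pos ⊆ I ∧ ∀ a ∈ r.neg, a ∉ I

/-- `I` satisfies rule `r`. -/
def satRule (I : Set α) (r : ARule α) : Prop :=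
  bodyTrue I r → ∃ h, r.head = some h ∧ h ∈ I

def isModel (I : Set α) (P : AProgram α) : Prop := ∀ r ∈ P, satRule I r

/-- Gelfond–Lifschitz reduct of `P` with respect to `I`. -/
def reduct (P : AProgram α) (I : Set α) : AProgram α :=
  {r' | ∃ r ∈ P, (∀ a ∈ r.neg, a ∉ I) ∧ r' = ⟨r.head, r.pos, ∅⟩}

/-- `I` is an answer set of `P`: a minimal model of the reduct `P^I`. -/
def isAnswerSet (P : AProgram α) (I : Set α) : Prop :=
  isModel I (reduct P I) ∧ ∀ J, J ⊂ I → ¬ isModel J (reduct P I)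

/-- A program is coherent if it has an answer set. -/
def coherent (P : AProgram α) : Prop := ∃ I, isAnswerSet P I

/-- `fix B M`: facts for atoms of `M` and constraints for atoms of `B \ M`. -/
def fixProg (B M : Set α) : AProgram α :=
  {r | (∃ a ∈ M, r = ⟨some a, ∅, ∅⟩) ∨ (∃ a ∈ B \ M, r = ⟨none, {a}, ∅⟩)}

/-- A ground weak constraint `:~ pos, not neg [weight@level]`. -/
structure WeakC (α : Type) where
  pos : Set α
  neg : Set α
  weight : ℤ
  level : ℤ

def WeakC.atoms (w : WeakC α) : Set α := w.pos ∪ w.neg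

/-- The body of a weak constraint is true in `I` (the weak constraint is violated). -/
def WeakC.violated (w : WeakC α) (I : Set α) : Prop :=
  w.pos ⊆ I ∧ ∀ a ∈ w.neg, a ∉ I

/-- Cost of interpretation `I` at level `l` for weak constraints `W`. -/
noncomputable def cost (W : Finset (WeakC α)) (I : Set α) (l : ℤ) : ℤ :=
  ∑ w ∈ W.filter (fun w => w.level = l ∧ WeakC.violated w I), w.weight

/-- `I` is dominated by `J` with respect to the weak constraints `W`. -/
def dominated (W : Finset (WeakC α)) (I J : Set α) : Prop :=
  ∃ l, cost W I l > cost W J l ∧ ∀ l' > l, cost W I l' = cost W J l'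

/-- `M` is an optimal answer set of program `P` with weak constraints `W`. -/
def optAS (P : AProgram α) (W : Finset (WeakC α)) (M : Set α) : Prop :=
  isAnswerSet P M ∧ ∀ M', isAnswerSet P M' → ¬ dominated W M M'

/-- `sat(P)`: add `not s` to each rule body, plus a choice on the fresh atom `s`
 (rules `s :- not n` and `n :- not s`). -/
def satProg (s n : α) (P : AProgram α) : AProgram α :=
  ((fun r : ARule α => ARule.mk r.head r.pos (insert s r.neg)) '' P) ∪
    {⟨some s, ∅, {n}⟩, ⟨some n, ∅, {s}⟩}

/-- Complement `¬P` of a program with constraints: each constraint `:- B` becomes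
 `v :- B`, and the constraint `:- not v` is added. -/
def complProg (v : α) (P : AProgram α) : AProgram α :=
  {r | r ∈ P ∧ r.head ≠ none} ∪
    {r' | ∃ r ∈ P, r.head = none ∧ r' = ⟨some v, r.pos, r.neg⟩} ∪
    {⟨none, ∅, {v}⟩}

/-- Rules of `relaxed(P,l)`: keep rules with heads, turn each constraint `:- B`
into `unsat :- B`. -/
def relaxedRules (u : α) (P : AProgram α) : AProgram α :=
  {r | r ∈ P ∧ r.head ≠ none} ∪
    {r' | ∃ r ∈ P, r.head = none ∧ r' = ⟨some u, r.pos, r.neg⟩}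

/-- The weak constraint `:~ unsat [1@l]` of `relaxed(P,l)`. -/
def relaxWeak (u : α) (l : ℤ) : WeakC α := ⟨{u}, ∅, 1, l⟩

/-- A stratification: positive dependencies do not increase the level,
negative dependencies strictly decrease it. -/
def IsStratification (P : AProgram α) (lv : α → ℕ) : Prop :=
  ∀ r ∈ P, ∀ h, r.head = some h →
    (∀ a ∈ r.pos, lv a ≤ lv h) ∧ (∀ a ∈ r.neg, lv a < lv h)

def Stratified (P : AProgram α) : Prop := ∃ lv, IsStratification P lv

/-- `M` (an answer set of a program with atom base `B`) satisfies the constraint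
program `C` iff `C ∪ fix_B(M)` is coherent. -/
def satisfiesC (C : AProgram α) (B M : Set α) : Prop := coherent (C ∪ fixProg B M)

end ASP


/-!
If `M` is an answer set of `¬P`, the constraint `:- not v` forces `v ∈ M`. Since the only rules
of `¬P` with head `v` come from constraints of `P`, minimality of `M` makes `M \ {v}` an answer
set of the constraint-free part of `P` in which the body of some constraint of `P` holds. An
answer set `I` of `P` is also an answer set of its constraint-free part, and a stratified program
has at most one answer set (answer sets are the atoms derivable in the reduct, and derivability
at a level only depends on lower levels), so `I = M \ {v}` violates that constraint.
-/

namespace ASP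

variable {α : Type} {P : AProgram α} {I J M : Set α} {v : α}

def constraintFree (P : AProgram α) : AProgram α := {r | r ∈ P ∧ r.head ≠ none}

theorem IsStratification.mono {Q : AProgram α} {lv : α → ℕ} (hQP : Q ⊆ P)
    (hlv : IsStratification P lv) : IsStratification Q lv :=
  fun r hr => hlv r (hQP hr)

theorem isModel_reduct_iff :
    isModel J (reduct P I) ↔
      ∀ r ∈ P, (∀ a ∈ r.neg, a ∉ I) → r.pos ⊆ J → ∃ h, r.head = some h ∧ h ∈ J := by
  constructor
  · intro hJ r hr hneg hpos
    exact hJ ⟨r.head, r.pos, ∅⟩ ⟨r, hr, hneg, rfl⟩ ⟨hpos, fun _ h => h.elim⟩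
  · rintro hJ _ ⟨r, hr, hneg, rfl⟩ ⟨hpos, -⟩
    exact hJ r hr hneg hpos

theorem isAnswerSet.not_bodyTrue_of_constraint (hI : isAnswerSet P I) {r : ARule α} (hr : r ∈ P)
    (hnone : r.head = none) : ¬ bodyTrue I r := by
  intro hbody
  obtain ⟨h, hh, -⟩ := isModel_reduct_iff.mp hI.1 r hr hbody.2 hbody.1
  simp [hnone] at hh

theorem isAnswerSet.constraintFree (hI : isAnswerSet P I) : isAnswerSet (constraintFree P) I := by
  refine ⟨isModel_reduct_iff.mpr fun r hr => isModel_reduct_iff.mp hI.1 r hr.1,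
    fun J hJI hJ => hI.2 J hJI (isModel_reduct_iff.mpr fun r hr hneg hpos => ?_)⟩
  by_cases hnone : r.head = none
  · exact (hI.not_bodyTrue_of_constraint hr hnone ⟨hpos.trans hJI.1, hneg⟩).elim
  · exact isModel_reduct_iff.mp hJ r ⟨hr, hnone⟩ hneg hpos

/-- The least model of the reduct `P^I`, generated bottom-up by its rules with a head. -/
inductive Derivable (P : AProgram α) (I : Set α) : α → Prop
  | step (r : ARule α) (h : α) : r ∈ P → r.head = some h → (∀ a ∈ r.neg, a ∉ I) →
      (∀ a ∈ r.pos, Derivable P I a) → Derivable P I h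

theorem Derivable.mem_of_isModel (hJ : isModel J (reduct P I)) {a : α}
    (ha : Derivable P I a) : a ∈ J := by
  induction ha with
  | step r h hr hh hneg _ ih =>
    obtain ⟨h', hh', hh'J⟩ := isModel_reduct_iff.mp hJ r hr hneg ih
    exact Option.some_injective _ (hh.symm.trans hh') ▸ hh'J

theorem isAnswerSet.mem_iff_derivable (hI : isAnswerSet P I) {a : α} :
    a ∈ I ↔ Derivable P I a := by
  have hsub : {a | Derivable P I a} ⊆ I := fun _ => Derivable.mem_of_isModel hI.1
  have hmodel : isModel {a | Derivable P I a} (reduct P I) := by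
    refine isModel_reduct_iff.mpr fun r hr hneg hpos => ?_
    cases hh : r.head with
    | none => exact (hI.not_bodyTrue_of_constraint hr hh ⟨hpos.trans hsub, hneg⟩).elim
    | some h => exact ⟨h, rfl, Derivable.step r h hr hh hneg hpos⟩
  have heq : {a | Derivable P I a} = I := by
    by_contra hne
    exact hI.2 _ (hsub.ssubset_of_ne hne) hmodel
  exact (Set.ext_iff.mp heq a).symm

theorem Derivable.of_agree_below {lv : α → ℕ} (hlv : IsStratification P lv) {n : ℕ}
    (hIJ : ∀ b, lv b < n → (b ∈ I ↔ b ∈ J)) {a : α} (ha : Derivable P I a) (hn : lv a ≤ n) :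
    Derivable P J a := by
  induction ha with
  | step r h hr hh hneg _ ih =>
    obtain ⟨hposlv, hneglv⟩ := hlv r hr h hh
    refine .step r h hr hh (fun b hb hbJ => hneg b hb ?_) fun b hb =>
      ih b hb ((hposlv b hb).trans hn)
    exact (hIJ b ((hneglv b hb).trans_le hn)).mpr hbJ

theorem isAnswerSet.eq_of_isStratification {lv : α → ℕ} (hlv : IsStratification P lv)
    (hI : isAnswerSet P I) (hJ : isAnswerSet P J) : I = J := by
  have agree : ∀ n a, lv a < n → (a ∈ I ↔ a ∈ J) := by
    intro n
    induction n with
    | zero => intro a ha; omega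
    | succ n ih =>
      intro a ha
      rw [hI.mem_iff_derivable, hJ.mem_iff_derivable]
      exact ⟨fun hd => hd.of_agree_below hlv ih (Nat.lt_succ_iff.mp ha),
        fun hd => hd.of_agree_below hlv (fun b hb => (ih b hb).symm) (Nat.lt_succ_iff.mp ha)⟩
  exact Set.ext fun a => agree _ a (Nat.lt_succ_self _)

theorem head_ne_of_notMem_progAtoms (hv : v ∉ progAtoms P) {r : ARule α} (hr : r ∈ P) {h : α}
    (hh : r.head = some h) : h ≠ v := by
  rintro rfl
  exact hv (Set.mem_biUnion hr (Or.inl (Or.inl hh)))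

theorem notMem_pos_of_notMem_progAtoms (hv : v ∉ progAtoms P) {r : ARule α} (hr : r ∈ P) :
    v ∉ r.pos :=
  fun h => hv (Set.mem_biUnion hr (Or.inl (Or.inr h)))

theorem notMem_neg_of_notMem_progAtoms (hv : v ∉ progAtoms P) {r : ARule α} (hr : r ∈ P) :
    v ∉ r.neg :=
  fun h => hv (Set.mem_biUnion hr (Or.inr h))

theorem mem_of_isAnswerSet_complProg (hM : isAnswerSet (complProg v P) M) : v ∈ M := by
  by_contra hvM
  exact hM.not_bodyTrue_of_constraint (r := ⟨none, ∅, {v}⟩) (Or.inr rfl) rfl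
    ⟨Set.empty_subset M, fun a ha => (Set.mem_singleton_iff.mp ha) ▸ hvM⟩

theorem isAnswerSet_constraintFree_diff_of_complProg (hv : v ∉ progAtoms P)
    (hM : isAnswerSet (complProg v P) M) : isAnswerSet (constraintFree P) (M \ {v}) := by
  have hvM := mem_of_isAnswerSet_complProg hM
  refine ⟨isModel_reduct_iff.mpr fun r hr hneg hpos => ?_,
    fun J hJ hJmod => hM.2 (insert v J) ?_ ?_⟩
  · have hnegM : ∀ a ∈ r.neg, a ∉ M := fun a ha haM =>
      hneg a ha ⟨haM, ne_of_mem_of_not_mem ha (notMem_neg_of_notMem_progAtoms hv hr.1)⟩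
    obtain ⟨h, hh, hhM⟩ :=
      isModel_reduct_iff.mp hM.1 r (Or.inl (Or.inl hr)) hnegM (hpos.trans Set.sdiff_subset)
    exact ⟨h, hh, hhM, head_ne_of_notMem_progAtoms hv hr.1 hh⟩
  · obtain ⟨x, ⟨hxM, hxv⟩, hxJ⟩ := Set.exists_of_ssubset hJ
    exact (Set.ssubset_iff_of_subset (Set.insert_subset hvM (hJ.1.trans Set.sdiff_subset))).mpr
      ⟨x, hxM, fun hx => hx.elim hxv hxJ⟩
  · refine isModel_reduct_iff.mpr fun r hr hneg hpos => ?_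
    rcases hr with (hr | ⟨c, -, -, rfl⟩) | rfl
    · have hposJ : r.pos ⊆ J := fun a ha =>
        (hpos ha).resolve_left (ne_of_mem_of_not_mem ha (notMem_pos_of_notMem_progAtoms hv hr.1))
      obtain ⟨h, hh, hhJ⟩ :=
        isModel_reduct_iff.mp hJmod r hr (fun a ha haN => hneg a ha haN.1) hposJ
      exact ⟨h, hh, Or.inr hhJ⟩
    · exact ⟨v, rfl, Set.mem_insert v J⟩
    · exact (hneg v rfl hvM).elim

theorem exists_constraint_bodyTrue_of_isAnswerSet_complProg (hv : v ∉ progAtoms P)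
    (hM : isAnswerSet (complProg v P) M) : ∃ r ∈ P, r.head = none ∧ bodyTrue (M \ {v}) r := by
  have hvM := mem_of_isAnswerSet_complProg hM
  have hnot : ¬ isModel (M \ {v}) (reduct (complProg v P) M) :=
    hM.2 _ (Set.sdiff_singleton_ssubset.mpr hvM)
  simp only [isModel_reduct_iff, not_forall] at hnot
  obtain ⟨r, hr, hneg, hpos, hno⟩ := hnot
  rcases hr with (hr | ⟨c, hc, hcnone, rfl⟩) | rfl
  · obtain ⟨h, hh, hhM⟩ :=
      isModel_reduct_iff.mp hM.1 r (Or.inl (Or.inl hr)) hneg (hpos.trans Set.sdiff_subset)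
    exact (hno ⟨h, hh, hhM, head_ne_of_notMem_progAtoms hv hr.1 hh⟩).elim
  · exact ⟨c, hc, hcnone, hpos, fun a ha haN => hneg a ha haN.1⟩
  · exact (hneg v rfl hvM).elim

end ASP

open ASP in
theorem complement_coherent_iff_incoherent_general {α : Type} (P : AProgram α) (v : α)
    (hstrat : Stratified P) (hv : v ∉ progAtoms P)
    (hcoh : coherent P) :
    coherent (complProg v P) ↔ ¬ coherent P := by
  obtain ⟨lv, hlv⟩ := hstrat
  obtain ⟨I, hI⟩ := hcoh
  refine ⟨fun ⟨M, hM⟩ _ => ?_, fun hP => (hP ⟨I, hI⟩).elim⟩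
  obtain ⟨r, hr, hnone, hbody⟩ := exists_constraint_bodyTrue_of_isAnswerSet_complProg hv hM
  have hIM : I = M \ {v} :=
    hI.constraintFree.eq_of_isStratification (hlv.mono (Set.sep_subset P _))
      (isAnswerSet_constraintFree_diff_of_complProg hv hM)
  exact hI.not_bodyTrue_of_constraint hr hnone (hIM ▸ hbody)

open ASP in
/-- the complement `¬P` of a coherent stratified program with
constraints is coherent iff `P` is incoherent. -/
theorem complement_coherent_iff_incoherent {α : Type} (P : AProgram α) (v : α)
    (hfin : P.Finite) (hstrat : Stratified P) (hv : v ∉ progAtoms P)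
    (hcoh : coherent P) :
    coherent (complProg v P) ↔ ¬ coherent P :=
  complement_coherent_iff_incoherent_general P v hstrat hv hcoh
end

section
/- Let P be a stratified propositional program with constraints and let l be an integer. Define relaxed(P,l) as the program obtained by keeping every rule of P that has a head, replacing every constraint ':- B' by the rule 'unsat :- B' for a fresh atom unsat, and adding the weak constraint ':~ unsat [1@l]'. Then relaxed(P,l) is always coherent, i.e., it has at least one answer set. -/
open Classical

namespace ASPProof
open ASP

variable {α : Type}

/-- `X` is closed at stratum `n`, given lower strata `L`. -/
def closedAt (Q : AProgram α) (lv : α → ℕ) (n : ℕ) (L X : Set α) : Prop :=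
  ∀ r ∈ Q, ∀ h : α, r.head = some h → lv h = n → r.pos ⊆ L ∪ X →
    (∀ a ∈ r.neg, a ∉ L) → h ∈ X

def stepJ (Q : AProgram α) (lv : α → ℕ) (n : ℕ) (L : Set α) : Set α :=
  ⋂₀ {X | closedAt Q lv n L X}

def low (Q : AProgram α) (lv : α → ℕ) : ℕ → Set α
  | 0 => ∅
  | n + 1 => low Q lv n ∪ stepJ Q lv n (low Q lv n)

def Jn (Q : AProgram α) (lv : α → ℕ) (n : ℕ) : Set α :=
  stepJ Q lv n (low Q lv n)

def Isol (Q : AProgram α) (lv : α → ℕ) : Set α := ⋃ n, Jn Q lv n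

lemma Jn_min {Q : AProgram α} {lv n X} (hX : closedAt Q lv n (low Q lv n) X) :
    Jn Q lv n ⊆ X := fun _ ha => ha X hX

lemma Jn_closed (Q : AProgram α) (lv n) :
    closedAt Q lv n (low Q lv n) (Jn Q lv n) := by
  intro r hr h hh hlv hpos hneg X hX
  exact hX r hr h hh hlv
    (hpos.trans (Set.union_subset_union_right _ (fun a ha => ha X hX))) hneg

lemma Jn_lv {Q : AProgram α} {lv n} : Jn Q lv n ⊆ {a | lv a = n} :=
  Jn_min (fun _ _ _ _ hlv _ _ => hlv)

lemma Jn_heads {Q : AProgram α} {lv n} : Jn Q lv n ⊆ heads Q :=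
  Jn_min (fun r hr h hh _ _ _ => ⟨r, hr, hh⟩)

lemma Jn_subset_low {Q : AProgram α} {lv} : ∀ {m n : ℕ}, m < n →
    Jn Q lv m ⊆ low Q lv n := by
  intro m n
  induction n with
  | zero => intro h; exact absurd h (Nat.not_lt_zero m)
  | succ n ih =>
    intro h
    rcases Nat.lt_succ_iff_lt_or_eq.mp h with h' | rfl
    · exact (ih h').trans Set.subset_union_left
    · exact Set.subset_union_right

lemma mem_low {Q : AProgram α} {lv} : ∀ {n : ℕ} {a : α}, a ∈ low Q lv n →
    a ∈ Jn Q lv (lv a) ∧ lv a < n := by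
  intro n
  induction n with
  | zero => intro a ha; exact absurd ha (Set.notMem_empty a)
  | succ n ih =>
    intro a ha
    rcases ha with ha | ha
    · exact ⟨(ih ha).1, Nat.lt_succ_of_lt (ih ha).2⟩
    · have := Jn_lv ha
      exact ⟨by rwa [this], by rw [this]; exact Nat.lt_succ_self n⟩

lemma mem_Isol {Q : AProgram α} {lv} {a : α} :
    a ∈ Isol Q lv ↔ a ∈ Jn Q lv (lv a) := by
  constructor
  · rintro ⟨s, ⟨m, rfl⟩, ha⟩
    have := Jn_lv ha
    rwa [this]
  · intro h; exact Set.mem_iUnion.mpr ⟨lv a, h⟩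

lemma low_subset_Isol {Q : AProgram α} {lv n} : low Q lv n ⊆ Isol Q lv :=
  fun a ha => mem_Isol.mpr (mem_low ha).1

lemma Isol_heads {Q : AProgram α} {lv} : Isol Q lv ⊆ heads Q := by
  intro a ha
  exact Jn_heads (mem_Isol.mp ha)

/-- Main combinatorial lemma: a stratified program in which every rule has
a head has `Isol Q lv` as an answer set. -/
theorem strat_answerSet (Q : AProgram α) (lv : α → ℕ)
    (hhead : ∀ r ∈ Q, r.head ≠ none) (hstrat : IsStratification Q lv) :
    isAnswerSet Q (Isol Q lv) := by
  constructor
  · -- model of the reduct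
    rintro r' ⟨r, hrQ, hneg, rfl⟩ hbody
    obtain ⟨h, hh⟩ : ∃ h, r.head = some h := by
      cases hr : r.head with
      | none => exact absurd hr (hhead r hrQ)
      | some h => exact ⟨h, rfl⟩
    refine ⟨h, hh, ?_⟩
    set n := lv h with hn
    have hmem : h ∈ Jn Q lv n := by
      apply Jn_closed Q lv n r hrQ h hh rfl
      · -- positive body ⊆ low n ∪ Jn n
        intro a ha
        have haI : a ∈ Isol Q lv := hbody.1 ha
        have haJ : a ∈ Jn Q lv (lv a) := mem_Isol.mp haI
        have hle : lv a ≤ n := (hstrat r hrQ h hh).1 a ha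
        rcases lt_or_eq_of_le hle with hlt | heq
        · exact Or.inl (Jn_subset_low hlt haJ)
        · exact Or.inr (heq ▸ haJ)
      · intro a ha hal
        exact hneg a ha (low_subset_Isol hal)
    exact mem_Isol.mpr hmem
  · -- minimality
    intro K hK hKmod
    have hmain : ∀ n : ℕ, Jn Q lv n ⊆ K := by
      intro n
      induction n using Nat.strong_induction_on with
      | _ n ih =>
        have hlowK : low Q lv n ⊆ K := by
          intro a ha
          obtain ⟨haJ, hlt⟩ := mem_low ha
          exact ih (lv a) hlt haJ
        have : Jn Q lv n ⊆ Jn Q lv n ∩ K := by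
          apply Jn_min
          intro r hr h hh hlv hpos hneg
          have hJ : h ∈ Jn Q lv n := by
            apply Jn_closed Q lv n r hr h hh hlv ?_ hneg
            exact hpos.trans (Set.union_subset_union_right _ Set.inter_subset_left)
          have hnegI : ∀ a ∈ r.neg, a ∉ Isol Q lv := by
            intro a ha haI
            have haJ : a ∈ Jn Q lv (lv a) := mem_Isol.mp haI
            have hlt : lv a < n := hlv ▸ (hstrat r hr h hh).2 a ha
            exact hneg a ha (Jn_subset_low hlt haJ)
          have hred : (⟨r.head, r.pos, ∅⟩ : ARule α) ∈ reduct Q (Isol Q lv) :=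
            ⟨r, hr, hnegI, rfl⟩
          have hposK : r.pos ⊆ K := by
            intro a ha
            rcases hpos ha with h1 | h2
            · exact hlowK h1
            · exact h2.2
          obtain ⟨h', hh', h'K⟩ := hKmod _ hred ⟨hposK, fun a ha => absurd ha (Set.notMem_empty a)⟩
          have : h' = h := by
            have : some h' = some h := hh'.symm.trans hh
            exact Option.some.inj this
          exact ⟨hJ, this ▸ h'K⟩
        exact fun a ha => (this ha).2
    have hIK : Isol Q lv ⊆ K := by
      rintro a ha
      exact hmain (lv a) (mem_Isol.mp ha)
    exact absurd hIK hK.2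

end ASPProof

open ASP in
/-- `relaxed(P,l)` (rules with heads kept, constraints `:- B` turned
into `unsat :- B`, plus the weak constraint `:~ unsat [1@l]`, which does not
affect answer sets) is always coherent. -/
theorem relaxed_always_coherent {α : Type} (P : AProgram α) (u : α) (l : ℤ)
    (hfin : P.Finite) (hstrat : Stratified P) (hu : u ∉ progAtoms P) :
    coherent (relaxedRules u P) := by
  classical
  obtain ⟨lv, hlv⟩ := hstrat
  -- the head part of P
  set P' : AProgram α := {r | r ∈ P ∧ r.head ≠ none} with hP'
  have hP'sub : P' ⊆ P := fun r hr => hr.1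
  have hstrat' : IsStratification P' lv := fun r hr => hlv r (hP'sub hr)
  have hhead' : ∀ r ∈ P', r.head ≠ none := fun r hr => hr.2
  set I : Set α := ASPProof.Isol P' lv with hIdef
  have hI : isAnswerSet P' I := ASPProof.strat_answerSet P' lv hhead' hstrat'
  -- u is fresh: it does not occur in any rule of P
  have hu' : ∀ r ∈ P, u ∉ ARule.atoms r := by
    intro r hr hmem
    exact hu (Set.mem_biUnion hr hmem)
  have hupos : ∀ r ∈ P, u ∉ r.pos := fun r hr h =>
    hu' r hr (Or.inl (Or.inr h))
  have huneg : ∀ r ∈ P, u ∉ r.neg := fun r hr h => hu' r hr (Or.inr h)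
  have huhead : ∀ r ∈ P, ∀ h : α, r.head = some h → h ≠ u := by
    intro r hr h hh heq
    apply hu' r hr
    left; left
    show r.head = some u
    rw [← heq]; exact hh
  have huI : u ∉ I := by
    intro huI
    obtain ⟨r, hr, hh⟩ := ASPProof.Isol_heads huI
    exact huhead r (hP'sub hr) u hh rfl
  -- candidate answer set of the relaxed program
  by_cases hviol : ∃ r ∈ P, r.head = none ∧ bodyTrue I r
  case neg =>
    -- no constraint body is true in I : I itself is the answer set
    refine ⟨I, ?_, ?_⟩
    · rintro r' ⟨s, hs, hneg, rfl⟩ hbody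
      rcases hs with hs | ⟨r, hrP, hrnone, rfl⟩
      · exact hI.1 _ ⟨s, hs, hneg, rfl⟩ hbody
      · exact absurd ⟨r, hrP, hrnone, hbody.1, hneg⟩ hviol
    · intro K hK hKmod
      refine hI.2 K hK ?_
      rintro r' ⟨r, hr, hneg, rfl⟩ hbody
      exact hKmod _ ⟨r, Or.inl hr, hneg, rfl⟩ hbody
  case pos =>
    -- some constraint body is true in I : add u
    refine ⟨I ∪ {u}, ?_, ?_⟩
    · -- model
      rintro r' ⟨s, hs, hneg, rfl⟩ hbody
      rcases hs with hs | ⟨r, hrP, hrnone, rfl⟩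
      · -- ordinary rule of P
        have hrP : s ∈ P := hs.1
        have hnegI : ∀ a ∈ s.neg, a ∉ I :=
          fun a ha hc => hneg a ha (Or.inl hc)
        have hposI : s.pos ⊆ I := by
          intro a ha
          rcases hbody.1 ha with h1 | h2
          · exact h1
          · exact absurd (Set.mem_singleton_iff.mp h2 ▸ ha) (hupos s hrP)
        obtain ⟨h, hh, hhI⟩ := hI.1 _ ⟨s, hs, hnegI, rfl⟩
          ⟨hposI, fun a ha => absurd ha (Set.notMem_empty a)⟩
        exact ⟨h, hh, Or.inl hhI⟩
      · -- the u-rule coming from a constraint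
        exact ⟨u, rfl, Or.inr rfl⟩
    · -- minimality
      intro K hK hKmod
      set K₀ : Set α := K \ {u} with hK₀
      have hK₀I : K₀ ⊆ I := by
        intro a ⟨haK, hau⟩
        rcases hK.1 haK with h | h
        · exact h
        · exact absurd h hau
      have hK₀mod : isModel K₀ (reduct P' I) := by
        rintro r' ⟨r, hr, hneg, rfl⟩ hbody
        have hrP : r ∈ P := hP'sub hr
        have hnegI' : ∀ a ∈ r.neg, a ∉ I ∪ {u} := by
          intro a ha hc
          rcases hc with h | h
          · exact hneg a ha h
          · exact huneg r hrP (Set.mem_singleton_iff.mp h ▸ ha)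
        obtain ⟨h, hh, hhK⟩ := hKmod _ ⟨r, Or.inl hr, hnegI', rfl⟩
          ⟨fun a ha => (hbody.1 ha).1, fun a ha => absurd ha (Set.notMem_empty a)⟩
        exact ⟨h, hh, hhK, huhead r hrP h hh⟩
      have hIK₀ : I ⊆ K₀ := by
        by_contra hc
        exact hI.2 K₀ ⟨hK₀I, hc⟩ hK₀mod
      have hIK : I ⊆ K := fun a ha => (hIK₀ ha).1
      -- K is strictly below I ∪ {u}, so u ∉ K
      have huK : u ∉ K := by
        intro huK
        apply hK.2
        intro a ha
        rcases ha with ha | ha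
        · exact hIK ha
        · exact (Set.mem_singleton_iff.mp ha) ▸ huK
      -- but the violated constraint forces u ∈ K
      obtain ⟨r, hrP, hrnone, hbI⟩ := hviol
      have hnegI' : ∀ a ∈ r.neg, a ∉ I ∪ {u} := by
        intro a ha hc
        rcases hc with h | h
        · exact hbI.2 a ha h
        · exact huneg r hrP (Set.mem_singleton_iff.mp h ▸ ha)
      have hured : (⟨some u, r.pos, ∅⟩ : ARule α) ∈
          reduct (relaxedRules u P) (I ∪ {u}) :=
        ⟨⟨some u, r.pos, r.neg⟩, Or.inr ⟨r, hrP, hrnone, rfl⟩, hnegI', rfl⟩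
      obtain ⟨h, hh, hhK⟩ := hKmod _ hured
        ⟨fun a ha => hIK (hbI.1 ha), fun a ha => absurd ha (Set.notMem_empty a)⟩
      exact huK (Option.some.inj hh ▸ hhK)
end

section
/- Splitting theorem: Let P be a propositional normal logic program and U a splitting set for P, i.e., for every rule r of P, if the head of r belongs to U then all atoms of r belong to U. Let b_U(P) be the set of rules of P all of whose atoms are in U, and t_U(P) = P \ b_U(P). For a set X ⊆ U, let e_U(Q,X) be the program obtained from those rules r of Q whose positive body atoms in U all lie in X and whose negative body atoms in U are disjoint from X, by deleting from their bodies all literals over atoms of U. Then M is an answer set of P if and only if M = X ∪ Y where X is an answer set of b_U(P) and Y is an answer set of e_U(t_U(P), X). -/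
open Classical

open ASP

/-- The bottom part of `P` w.r.t. splitting set `U`. -/
def bU {α : Type} (U : Set α) (P : AProgram α) : AProgram α :=
  {r | r ∈ P ∧ ARule.atoms r ⊆ U}

/-- The top part of `P` w.r.t. splitting set `U`. -/
def tU {α : Type} (U : Set α) (P : AProgram α) : AProgram α := P \ bU U P

/-- The partial evaluation `e_U(Q, X)`. -/
def eU {α : Type} (U : Set α) (Q : AProgram α) (X : Set α) : AProgram α :=
  {r' | ∃ r ∈ Q, (r.pos ∩ U ⊆ X) ∧ (∀ a ∈ r.neg ∩ U, a ∉ X) ∧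
    r' = ⟨r.head, r.pos \ U, r.neg \ U⟩}

lemma negEmpty {α : Type} (I : Set α) : ∀ a ∈ (∅ : Set α), a ∉ I :=
  fun a ha => absurd ha (Set.notMem_empty a)

lemma as_head {α : Type} {Q : AProgram α} {I : Set α} (h : isAnswerSet Q I) :
    ∀ a ∈ I, ∃ r ∈ Q, r.head = some a := by
  intro a ha
  by_contra hno
  push_neg at hno
  refine h.2 (I \ {a}) (Set.sdiff_singleton_ssubset.mpr ha) ?_
  rintro r' ⟨r, hrQ, hneg, rfl⟩ hb
  obtain ⟨hh, heq, hhI⟩ := h.1 _ ⟨r, hrQ, hneg, rfl⟩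
    ⟨hb.1.trans Set.diff_subset, negEmpty I⟩
  exact ⟨hh, heq, hhI, fun he => hno r hrQ ((Set.mem_singleton_iff.mp he) ▸ heq)⟩

lemma bU_head {α : Type} {U : Set α} {P : AProgram α} {r : ARule α} {h : α}
    (hr : r ∈ bU U P) (hh : r.head = some h) : h ∈ U :=
  hr.2 (Or.inl (Or.inl hh))

lemma bU_pos {α : Type} {U : Set α} {P : AProgram α} {r : ARule α}
    (hr : r ∈ bU U P) : r.pos ⊆ U := fun _ ha => hr.2 (Or.inl (Or.inr ha))

lemma bU_neg {α : Type} {U : Set α} {P : AProgram α} {r : ARule α}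
    (hr : r ∈ bU U P) : r.neg ⊆ U := fun _ ha => hr.2 (Or.inr ha)

lemma tU_head {α : Type} {U : Set α} {P : AProgram α}
    (hU : ∀ r ∈ P, (∀ h, r.head = some h → h ∈ U) → ARule.atoms r ⊆ U)
    {r : ARule α} (hr : r ∈ tU U P) : ∃ h, r.head = some h ∧ h ∉ U := by
  rcases hr with ⟨hrP, hrb⟩
  by_contra hc
  push_neg at hc
  exact hrb ⟨hrP, hU r hrP hc⟩

/-- Splitting theorem: if `U` is a splitting set of `P`, the answer
sets of `P` are exactly the unions `X ∪ Y` with `X` an answer set of `b_U(P)` and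
`Y` an answer set of `e_U(t_U(P), X)`. -/
theorem splitting_theorem {α : Type} (P : AProgram α) (hfin : P.Finite) (U : Set α)
    (hU : ∀ r ∈ P, (∀ h, r.head = some h → h ∈ U) → ARule.atoms r ⊆ U) (M : Set α) :
    isAnswerSet P M ↔
      ∃ X Y, M = X ∪ Y ∧ isAnswerSet (bU U P) X ∧ isAnswerSet (eU U (tU U P) X) Y := by
  constructor
  · -- forward
    intro hM
    refine ⟨M ∩ U, M \ U, (Set.inter_union_diff M U).symm, ⟨?_, ?_⟩, ⟨?_, ?_⟩⟩
    · -- X is a model of reduct (bU U P) X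
      rintro r' ⟨r, hrb, hneg, rfl⟩ hb
      have hnegM : ∀ a ∈ r.neg, a ∉ M := fun a ha hM' => hneg a ha ⟨hM', bU_neg hrb ha⟩
      obtain ⟨h, heq, hhM⟩ := hM.1 _ ⟨r, hrb.1, hnegM, rfl⟩
        ⟨hb.1.trans Set.inter_subset_left, negEmpty M⟩
      exact ⟨h, heq, hhM, bU_head hrb heq⟩
    · -- X is minimal
      intro J hJ hmod
      obtain ⟨a, haX, haJ⟩ := Set.exists_of_ssubset hJ
      have hsub : J ∪ (M \ U) ⊆ M :=
        Set.union_subset (hJ.subset.trans Set.inter_subset_left) Set.diff_subset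
      have hss : J ∪ (M \ U) ⊂ M := by
        refine ⟨hsub, fun hle => ?_⟩
        rcases hle haX.1 with hj | hd
        · exact haJ hj
        · exact hd.2 haX.2
      refine hM.2 _ hss ?_
      rintro r' ⟨r, hrP, hnegM, rfl⟩ hb
      by_cases hrb : r ∈ bU U P
      · have hr' : (⟨r.head, r.pos, ∅⟩ : ARule α) ∈ reduct (bU U P) (M ∩ U) :=
          ⟨r, hrb, fun a ha hax => hnegM a ha hax.1, rfl⟩
        have hposJ : r.pos ⊆ J := by
          intro b hbp
          rcases hb.1 hbp with hj | hd
          · exact hj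
          · exact absurd (bU_pos hrb hbp) hd.2
        obtain ⟨h, heq, hhJ⟩ := hmod _ hr' ⟨hposJ, negEmpty J⟩
        exact ⟨h, heq, Or.inl hhJ⟩
      · have hrt : r ∈ tU U P := ⟨hrP, hrb⟩
        obtain ⟨h0, heq0, hh0U⟩ := tU_head hU hrt
        obtain ⟨h, heq, hhM⟩ := hM.1 _ ⟨r, hrP, hnegM, rfl⟩
          ⟨hb.1.trans hsub, negEmpty M⟩
        have hhU : h ∉ U := by
          have : h0 = h := Option.some.inj (heq0 ▸ heq)
          exact this ▸ hh0U
        exact ⟨h, heq, Or.inr ⟨hhM, hhU⟩⟩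
    · -- Y is a model of reduct (eU U (tU U P) X) Y
      rintro r' ⟨r1, hr1e, hnegY, rfl⟩ hb
      obtain ⟨r, hrt, hposU, hnegU, rfl⟩ := hr1e
      have hnegM : ∀ a ∈ r.neg, a ∉ M := by
        intro a ha haM
        by_cases haU : a ∈ U
        · exact hnegU a ⟨ha, haU⟩ ⟨haM, haU⟩
        · exact hnegY a ⟨ha, haU⟩ ⟨haM, haU⟩
      have hposM : r.pos ⊆ M := by
        intro b hbp
        by_cases hbU : b ∈ U
        · exact (hposU ⟨hbp, hbU⟩).1
        · exact (hb.1 ⟨hbp, hbU⟩).1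
      obtain ⟨h, heq, hhM⟩ := hM.1 _ ⟨r, hrt.1, hnegM, rfl⟩ ⟨hposM, negEmpty M⟩
      obtain ⟨h0, heq0, hh0U⟩ := tU_head hU hrt
      have hhU : h ∉ U := by
        have : h0 = h := Option.some.inj (heq0 ▸ heq)
        exact this ▸ hh0U
      exact ⟨h, heq, hhM, hhU⟩
    · -- Y is minimal
      intro K hK hmod
      obtain ⟨a, haY, haK⟩ := Set.exists_of_ssubset hK
      have hsub : (M ∩ U) ∪ K ⊆ M :=
        Set.union_subset Set.inter_subset_left (hK.subset.trans Set.diff_subset)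
      have hss : (M ∩ U) ∪ K ⊂ M := by
        refine ⟨hsub, fun hle => ?_⟩
        rcases hle haY.1 with hx | hk
        · exact haY.2 hx.2
        · exact haK hk
      refine hM.2 _ hss ?_
      rintro r' ⟨r, hrP, hnegM, rfl⟩ hb
      by_cases hrb : r ∈ bU U P
      · have hr' : (⟨r.head, r.pos, ∅⟩ : ARule α) ∈ reduct (bU U P) (M ∩ U) :=
          ⟨r, hrb, fun a ha hax => hnegM a ha hax.1, rfl⟩
        have hposX : r.pos ⊆ M ∩ U := by
          intro b hbp
          rcases hb.1 hbp with hx | hk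
          · exact hx
          · exact absurd (bU_pos hrb hbp) (hK.subset hk).2
        obtain ⟨h, heq, hhX⟩ := hM.1 _ ⟨r, hrP, hnegM, rfl⟩
          ⟨hposX.trans Set.inter_subset_left, negEmpty M⟩
        exact ⟨h, heq, Or.inl ⟨hhX, bU_head hrb heq⟩⟩
      · have hrt : r ∈ tU U P := ⟨hrP, hrb⟩
        have hre : (⟨r.head, r.pos \ U, r.neg \ U⟩ : ARule α) ∈ eU U (tU U P) (M ∩ U) := by
          refine ⟨r, hrt, ?_, ?_, rfl⟩
          · intro b hb2
            rcases hb.1 hb2.1 with hx | hk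
            · exact hx
            · exact absurd hb2.2 (hK.subset hk).2
          · exact fun a ha hax => hnegM a ha.1 hax.1
        have hrr : (⟨r.head, r.pos \ U, ∅⟩ : ARule α) ∈ reduct (eU U (tU U P) (M ∩ U)) (M \ U) :=
          ⟨_, hre, fun a ha had => hnegM a ha.1 had.1, rfl⟩
        have hposK : r.pos \ U ⊆ K := by
          intro b hb2
          rcases hb.1 hb2.1 with hx | hk
          · exact absurd hx.2 hb2.2
          · exact hk
        obtain ⟨h, heq, hhK⟩ := hmod _ hrr ⟨hposK, negEmpty K⟩
        exact ⟨h, heq, Or.inr hhK⟩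
  · -- backward
    rintro ⟨X, Y, rfl, hX, hY⟩
    have hXU : X ⊆ U := by
      intro a ha
      obtain ⟨r, hr, hh⟩ := as_head hX a ha
      exact bU_head hr hh
    have hYU : ∀ a ∈ Y, a ∉ U := by
      intro a ha
      obtain ⟨r', hr', hh⟩ := as_head hY a ha
      obtain ⟨r, hrt, _, _, rfl⟩ := hr'
      obtain ⟨h0, heq0, hh0U⟩ := tU_head hU hrt
      have : h0 = a := Option.some.inj (heq0 ▸ hh)
      exact this ▸ hh0U
    have hmemU : ∀ a ∈ U, (a ∈ X ∪ Y ↔ a ∈ X) := by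
      intro a haU
      constructor
      · rintro (hx | hy)
        · exact hx
        · exact absurd haU (hYU a hy)
      · exact Or.inl
    have hmemY : ∀ a ∉ U, (a ∈ X ∪ Y ↔ a ∈ Y) := by
      intro a haU
      constructor
      · rintro (hx | hy)
        · exact absurd (hXU hx) haU
        · exact hy
      · exact Or.inr
    constructor
    · -- model
      rintro r' ⟨r, hrP, hnegM, rfl⟩ hb
      by_cases hrb : r ∈ bU U P
      · have hr' : (⟨r.head, r.pos, ∅⟩ : ARule α) ∈ reduct (bU U P) X :=
          ⟨r, hrb, fun a ha hax => hnegM a ha (Or.inl hax), rfl⟩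
        have hposX : r.pos ⊆ X :=
          fun b hbp => (hmemU b (bU_pos hrb hbp)).mp (hb.1 hbp)
        obtain ⟨h, heq, hhX⟩ := hX.1 _ hr' ⟨hposX, negEmpty X⟩
        exact ⟨h, heq, Or.inl hhX⟩
      · have hrt : r ∈ tU U P := ⟨hrP, hrb⟩
        have hre : (⟨r.head, r.pos \ U, r.neg \ U⟩ : ARule α) ∈ eU U (tU U P) X := by
          refine ⟨r, hrt, ?_, ?_, rfl⟩
          · exact fun b hb2 => (hmemU b hb2.2).mp (hb.1 hb2.1)
          · exact fun a ha hax => hnegM a ha.1 (Or.inl hax)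
        have hrr : (⟨r.head, r.pos \ U, ∅⟩ : ARule α) ∈ reduct (eU U (tU U P) X) Y :=
          ⟨_, hre, fun a ha hay => hnegM a ha.1 (Or.inr hay), rfl⟩
        have hposY : r.pos \ U ⊆ Y :=
          fun b hb2 => (hmemY b hb2.2).mp (hb.1 hb2.1)
        obtain ⟨h, heq, hhY⟩ := hY.1 _ hrr ⟨hposY, negEmpty Y⟩
        exact ⟨h, heq, Or.inr hhY⟩
    · -- minimal
      intro J hJ hmod
      have hJX : J ∩ U ⊆ X :=
        fun a ha => (hmemU a ha.2).mp (hJ.subset ha.1)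
      have hJY : J \ U ⊆ Y :=
        fun a ha => (hmemY a ha.2).mp (hJ.subset ha.1)
      have hmodX : isModel (J ∩ U) (reduct (bU U P) X) := by
        rintro r' ⟨r, hrb, hnegX, rfl⟩ hb
        have hnegM : ∀ a ∈ r.neg, a ∉ X ∪ Y := by
          intro a ha haM
          exact hnegX a ha ((hmemU a (bU_neg hrb ha)).mp haM)
        obtain ⟨h, heq, hhJ⟩ := hmod _ ⟨r, hrb.1, hnegM, rfl⟩
          ⟨hb.1.trans Set.inter_subset_left, negEmpty J⟩
        exact ⟨h, heq, hhJ, bU_head hrb heq⟩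
      by_cases hxe : J ∩ U = X
      · -- then J \ U ⊂ Y; contradict minimality of Y
        have hJYs : J \ U ⊂ Y := by
          refine ⟨hJY, fun hsup => ?_⟩
          refine hJ.2 (Set.union_subset ?_ (hsup.trans Set.diff_subset))
          exact hxe ▸ Set.inter_subset_left
        refine hY.2 _ hJYs ?_
        rintro r' ⟨r1, hr1e, hnegY, rfl⟩ hb
        obtain ⟨r, hrt, hposU, hnegU, rfl⟩ := hr1e
        have hnegM : ∀ a ∈ r.neg, a ∉ X ∪ Y := by
          intro a ha haM
          by_cases haU : a ∈ U
          · exact hnegU a ⟨ha, haU⟩ ((hmemU a haU).mp haM)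
          · exact hnegY a ⟨ha, haU⟩ ((hmemY a haU).mp haM)
        have hrm : (⟨r.head, r.pos, ∅⟩ : ARule α) ∈ reduct P (X ∪ Y) :=
          ⟨r, hrt.1, hnegM, rfl⟩
        have hposJ : r.pos ⊆ J := by
          intro b hbp
          by_cases hbU : b ∈ U
          · have : b ∈ J ∩ U := hxe ▸ (hposU ⟨hbp, hbU⟩ : b ∈ X)
            exact this.1
          · exact (hb.1 ⟨hbp, hbU⟩).1
        obtain ⟨h, heq, hhJ⟩ := hmod _ hrm ⟨hposJ, negEmpty J⟩
        obtain ⟨h0, heq0, hh0U⟩ := tU_head hU hrt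
        have hhU : h ∉ U := by
          have : h0 = h := Option.some.inj (heq0 ▸ heq)
          exact this ▸ hh0U
        exact ⟨h, heq, hhJ, hhU⟩
      · exact hX.2 _ (Set.ssubset_iff_subset_ne.mpr ⟨hJX, hxe⟩) hmodX
end

section
/- Let P1, P2 be propositional normal programs such that no head atom of P2 occurs in P1, and let W1 be a set of weak constraints with all atoms in the atoms of P1. Then M is an optimal answer set of P1 ∪ W1 ∪ sat(P2) if and only if M = M1 ∪ M2 where M1 is an optimal answer set of P1 ∪ W1 and M2 ⊆ heads(sat(P2)) is either {sat} or such that M1 ∪ M2 is an answer set of P2 ∪ fix_{P1}(M1). -/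
open Classical

namespace ASP

variable {α : Type}

-- basic lemmas
lemma head_mem_progAtoms {P : AProgram α} {r : ARule α} (hr : r ∈ P) {a : α}
    (ha : r.head = some a) : a ∈ progAtoms P :=
  Set.mem_biUnion hr (Or.inl (Or.inl ha))

lemma pos_subset_progAtoms {P : AProgram α} {r : ARule α} (hr : r ∈ P) :
    r.pos ⊆ progAtoms P := fun a ha => Set.mem_biUnion hr (Or.inl (Or.inr ha))

lemma neg_subset_progAtoms {P : AProgram α} {r : ARule α} (hr : r ∈ P) :
    r.neg ⊆ progAtoms P := fun a ha => Set.mem_biUnion hr (Or.inr ha)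

lemma heads_subset_progAtoms (P : AProgram α) : heads P ⊆ progAtoms P := by
  rintro a ⟨r, hr, hh⟩; exact head_mem_progAtoms hr hh

lemma reduct_union (P Q : AProgram α) (I : Set α) :
    reduct (P ∪ Q) I = reduct P I ∪ reduct Q I := by
  ext r'; constructor
  · rintro ⟨r, (h | h), hneg, rfl⟩
    exacts [Or.inl ⟨r, h, hneg, rfl⟩, Or.inr ⟨r, h, hneg, rfl⟩]
  · rintro (⟨r, h, hneg, rfl⟩ | ⟨r, h, hneg, rfl⟩)
    exacts [⟨r, Or.inl h, hneg, rfl⟩, ⟨r, Or.inr h, hneg, rfl⟩]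

lemma reduct_congr {P : AProgram α} {I J : Set α}
    (h : ∀ a ∈ progAtoms P, (a ∈ I ↔ a ∈ J)) : reduct P I = reduct P J := by
  ext r'; constructor <;> rintro ⟨r, hr, hneg, rfl⟩
  · exact ⟨r, hr, fun a ha haJ => hneg a ha ((h a (neg_subset_progAtoms hr ha)).mpr haJ), rfl⟩
  · exact ⟨r, hr, fun a ha haI => hneg a ha ((h a (neg_subset_progAtoms hr ha)).mp haI), rfl⟩

lemma heads_reduct_subset (P : AProgram α) (I : Set α) :
    heads (reduct P I) ⊆ heads P := by
  rintro a ⟨r', ⟨r, hr, hneg, rfl⟩, hh⟩; exact ⟨r, hr, hh⟩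

lemma answerSet_subset_heads_reduct {P : AProgram α} {I : Set α}
    (h : isAnswerSet P I) : I ⊆ heads (reduct P I) := by
  by_contra hc
  have hsub : I ∩ heads (reduct P I) ⊂ I := by
    constructor
    · exact Set.inter_subset_left
    · intro hle
      exact hc fun a ha => (hle ha).2
  refine h.2 _ hsub ?_
  rintro r' hr' hbt
  obtain ⟨r, hr, hneg, rfl⟩ := hr'
  have hbt' : bodyTrue I ⟨r.head, r.pos, ∅⟩ :=
    ⟨fun a ha => (hbt.1 ha).1, by simp⟩
  obtain ⟨h0, hh0, hh0I⟩ := h.1 _ ⟨r, hr, hneg, rfl⟩ hbt'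
  exact ⟨h0, hh0, hh0I, ⟨_, ⟨r, hr, hneg, rfl⟩, hh0⟩⟩

lemma answerSet_subset_heads {P : AProgram α} {I : Set α}
    (h : isAnswerSet P I) : I ⊆ heads P :=
  (answerSet_subset_heads_reduct h).trans (heads_reduct_subset P I)

lemma reduct_fixProg (B M I : Set α) : reduct (fixProg B M) I = fixProg B M := by
  ext r'; constructor
  · rintro ⟨r, (⟨a, ha, rfl⟩ | ⟨a, ha, rfl⟩), hneg, rfl⟩
    exacts [Or.inl ⟨a, ha, rfl⟩, Or.inr ⟨a, ha, rfl⟩]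
  · rintro (⟨a, ha, rfl⟩ | ⟨a, ha, rfl⟩)
    exacts [⟨_, Or.inl ⟨a, ha, rfl⟩, by simp, rfl⟩, ⟨_, Or.inr ⟨a, ha, rfl⟩, by simp, rfl⟩]

lemma heads_fixProg (B M : Set α) : heads (fixProg B M) = M := by
  ext a; constructor
  · rintro ⟨r, (⟨b, hb, rfl⟩ | ⟨b, hb, rfl⟩), hh⟩
    · cases hh; exact hb
    · cases hh
  · intro ha; exact ⟨⟨some a, ∅, ∅⟩, Or.inl ⟨a, ha, rfl⟩, rfl⟩

lemma heads_satProg_subset (s n : α) (P : AProgram α) :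
    heads (satProg s n P) ⊆ heads P ∪ {s, n} := by
  rintro a ⟨r, hr, hh⟩
  rcases hr with ⟨r0, hr0, rfl⟩ | hr
  · exact Or.inl ⟨r0, hr0, hh⟩
  · rcases hr with rfl | rfl
    · cases hh; exact Or.inr (Or.inl rfl)
    · cases hh; exact Or.inr (Or.inr rfl)

lemma s_mem_heads_satProg (s n : α) (P : AProgram α) : s ∈ heads (satProg s n P) :=
  ⟨⟨some s, ∅, {n}⟩, Or.inr (Or.inl rfl), rfl⟩

lemma heads_subset_heads_satProg (s n : α) (P : AProgram α) :
    heads P ⊆ heads (satProg s n P) := by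
  rintro a ⟨r, hr, hh⟩
  exact ⟨_, Or.inl ⟨r, hr, rfl⟩, hh⟩

end ASP

namespace ASP
variable {α : Type}

lemma reduct_satProg_s {s n : α} {P : AProgram α} {N : Set α}
    (hsN : s ∈ N) (hnN : n ∉ N) :
    reduct (satProg s n P) N = {(⟨some s, ∅, ∅⟩ : ARule α)} := by
  ext r'; constructor
  · rintro ⟨r, hr, hneg, rfl⟩
    rcases hr with ⟨r0, hr0, rfl⟩ | (rfl | rfl)
    · exact absurd hsN (hneg s (Set.mem_insert _ _))
    · rfl
    · exact absurd hsN (hneg s rfl)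
  · rintro rfl
    exact ⟨⟨some s, ∅, {n}⟩, Or.inr (Or.inl rfl), by
      intro a ha; cases ha; exact hnN, rfl⟩

lemma reduct_satProg_both {s n : α} {P : AProgram α} {N : Set α}
    (hsN : s ∈ N) (hnN : n ∈ N) :
    reduct (satProg s n P) N = ∅ := by
  ext r'; simp only [Set.mem_empty_iff_false, iff_false]
  rintro ⟨r, hr, hneg, rfl⟩
  rcases hr with ⟨r0, hr0, rfl⟩ | (rfl | rfl)
  · exact hneg s (Set.mem_insert _ _) hsN
  · exact hneg n rfl hnN
  · exact hneg s rfl hsN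

lemma reduct_satProg_n {s n : α} {P : AProgram α} {N : Set α}
    (hsN : s ∉ N) (hnN : n ∈ N) :
    reduct (satProg s n P) N = reduct P N ∪ {(⟨some n, ∅, ∅⟩ : ARule α)} := by
  ext r'; constructor
  · rintro ⟨r, hr, hneg, rfl⟩
    rcases hr with ⟨r0, hr0, rfl⟩ | (rfl | rfl)
    · exact Or.inl ⟨r0, hr0, fun a ha => hneg a (Set.mem_insert_of_mem _ ha), rfl⟩
    · exact absurd hnN (hneg n rfl)
    · exact Or.inr rfl
  · rintro (⟨r, hr, hneg, rfl⟩ | rfl)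
    · refine ⟨⟨r.head, r.pos, insert s r.neg⟩, Or.inl ⟨r, hr, rfl⟩, ?_, rfl⟩
      intro a ha
      rcases ha with rfl | ha
      exacts [hsN, hneg a ha]
    · exact ⟨⟨some n, ∅, {s}⟩, Or.inr (Or.inr rfl), by
        intro a ha; cases ha; exact hsN, rfl⟩

lemma not_s_rule_alive {s n : α} {P : AProgram α} {N : Set α}
    (hnN : n ∉ N) : (⟨some s, ∅, ∅⟩ : ARule α) ∈ reduct (satProg s n P) N :=
  ⟨⟨some s, ∅, {n}⟩, Or.inr (Or.inl rfl), by intro a ha; cases ha; exact hnN, rfl⟩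

end ASP

namespace ASP
variable {α : Type}

lemma bodyTrue_empty_neg {I : Set α} {h : Option α} {p : Set α} (hp : p ⊆ I) :
    bodyTrue I ⟨h, p, ∅⟩ := ⟨hp, by simp⟩

/-- Backward, sat case: if `M1` is an answer set of `P1` then `M1 ∪ {s}` is an
answer set of `P1 ∪ sat(P2)`. -/
lemma AS_s_case {P1 P2 : AProgram α} {s n : α}
    (hs : s ∉ progAtoms P1) (hn : n ∉ progAtoms P1) (hsn : s ≠ n)
    {M1 : Set α} (hM1 : isAnswerSet P1 M1) :
    isAnswerSet (P1 ∪ satProg s n P2) (M1 ∪ {s}) := by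
  have hM1A : M1 ⊆ progAtoms P1 :=
    (answerSet_subset_heads hM1).trans (heads_subset_progAtoms P1)
  have hsM1 : s ∉ M1 := fun h => hs (hM1A h)
  have hnN : n ∉ M1 ∪ {s} := by
    rintro (h | h)
    · exact hn (hM1A h)
    · exact hsn h.symm
  have hred1 : reduct P1 (M1 ∪ {s}) = reduct P1 M1 := by
    apply reduct_congr
    intro a ha
    constructor
    · rintro (h | h)
      · exact h
      · cases h; exact absurd ha hs
    · exact Or.inl
  have hredQ : reduct (P1 ∪ satProg s n P2) (M1 ∪ {s}) =
      reduct P1 M1 ∪ {(⟨some s, ∅, ∅⟩ : ARule α)} := by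
    have hsN : s ∈ M1 ∪ {s} := Set.mem_union_right _ rfl
    rw [reduct_union, hred1, reduct_satProg_s hsN hnN]
  constructor
  · intro r' hr' hbt
    rw [hredQ] at hr'
    rcases hr' with hr' | hr'
    · obtain ⟨r, hr, hneg, rfl⟩ := hr'
      have hpos : r.pos ⊆ M1 := by
        intro a ha
        rcases hbt.1 ha with h | h
        · exact h
        · cases h; exact absurd (pos_subset_progAtoms hr ha) hs
      obtain ⟨h0, hh0, hh0M⟩ := hM1.1 _ ⟨r, hr, hneg, rfl⟩ (bodyTrue_empty_neg hpos)
      exact ⟨h0, hh0, Or.inl hh0M⟩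
    · cases hr'
      exact ⟨s, rfl, Or.inr rfl⟩
  · intro J hJ hmod
    rw [hredQ] at hmod
    have hsJ : s ∈ J := by
      obtain ⟨h0, hh0, hh0J⟩ := hmod _ (Or.inr rfl) (bodyTrue_empty_neg (by simp))
      cases hh0; exact hh0J
    rw [Set.ssubset_def] at hJ
    obtain ⟨hJsub, hJne⟩ := hJ
    obtain ⟨x, hxN, hxJ⟩ := Set.not_subset.mp hJne
    have hxM1 : x ∈ M1 := by
      rcases hxN with h | h
      · exact h
      · cases h; exact absurd hsJ hxJ
    refine hM1.2 (J \ {s}) ?_ ?_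
    · rw [Set.ssubset_def]
      constructor
      · intro a ⟨haJ, has⟩
        rcases hJsub haJ with h | h
        · exact h
        · exact absurd h has
      · intro hle
        exact hxJ (hle hxM1).1
    · rintro r' hr' hbt
      obtain ⟨r, hr, hneg, rfl⟩ := hr'
      have : bodyTrue J ⟨r.head, r.pos, ∅⟩ :=
        bodyTrue_empty_neg (fun a ha => (hbt.1 ha).1)
      obtain ⟨h0, hh0, hh0J⟩ := hmod _ (Or.inl ⟨r, hr, hneg, rfl⟩) this
      refine ⟨h0, hh0, hh0J, ?_⟩
      intro hh0s
      cases hh0s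
      exact hs (head_mem_progAtoms hr hh0)

end ASP

namespace ASP
variable {α : Type}

lemma heads_union (P Q : AProgram α) : heads (P ∪ Q) = heads P ∪ heads Q := by
  ext a; constructor
  · rintro ⟨r, (h | h), hh⟩
    exacts [Or.inl ⟨r, h, hh⟩, Or.inr ⟨r, h, hh⟩]
  · rintro (⟨r, h, hh⟩ | ⟨r, h, hh⟩)
    exacts [⟨r, Or.inl h, hh⟩, ⟨r, Or.inr h, hh⟩]

/-- Backward, unsat case: if `M1` is an answer set of `P1` and `K` an answer set
of `P2 ∪ fix(M1)` then `K ∪ {n}` is an answer set of `P1 ∪ sat(P2)`. -/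
lemma AS_n_case {P1 P2 : AProgram α} {s n : α}
    (hheads : ∀ a ∈ heads P2, a ∉ progAtoms P1)
    (hs : s ∉ progAtoms P1 ∪ progAtoms P2) (hn : n ∉ progAtoms P1 ∪ progAtoms P2)
    (hsn : s ≠ n) {M1 K : Set α} (hM1 : isAnswerSet P1 M1)
    (hK : isAnswerSet (P2 ∪ fixProg (progAtoms P1) M1) K) :
    isAnswerSet (P1 ∪ satProg s n P2) (K ∪ {n}) := by
  set A1 := progAtoms P1 with hA1
  have hsA1 : s ∉ A1 := fun h => hs (Or.inl h)
  have hsA2 : s ∉ progAtoms P2 := fun h => hs (Or.inr h)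
  have hnA1 : n ∉ A1 := fun h => hn (Or.inl h)
  have hnA2 : n ∉ progAtoms P2 := fun h => hn (Or.inr h)
  have hM1A : M1 ⊆ A1 :=
    (answerSet_subset_heads hM1).trans (heads_subset_progAtoms P1)
  have hKh : K ⊆ heads P2 ∪ M1 := by
    intro a ha
    have := answerSet_subset_heads hK ha
    rw [heads_union, heads_fixProg] at this
    exact this
  have hsK : s ∉ K := by
    intro h
    rcases hKh h with h | h
    · exact hsA2 (heads_subset_progAtoms P2 h)
    · exact hsA1 (hM1A h)
  have hnK : n ∉ K := by
    intro h
    rcases hKh h with h | h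
    · exact hnA2 (heads_subset_progAtoms P2 h)
    · exact hnA1 (hM1A h)
  have hredK : reduct (P2 ∪ fixProg A1 M1) K = reduct P2 K ∪ fixProg A1 M1 := by
    rw [reduct_union, reduct_fixProg]
  have hM1K : M1 ⊆ K := by
    intro a ha
    obtain ⟨h0, hh0, hh0K⟩ := hK.1 (⟨some a, ∅, ∅⟩ : ARule α)
      (by rw [hredK]; exact Or.inr (Or.inl ⟨a, ha, rfl⟩)) (bodyTrue_empty_neg (by simp))
    cases hh0; exact hh0K
  have hKA1 : K ∩ A1 = M1 := by
    apply Set.Subset.antisymm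
    · rintro a ⟨haK, haA1⟩
      rcases hKh haK with h | h
      · exact absurd haA1 (hheads a h)
      · exact h
    · intro a ha; exact ⟨hM1K ha, hM1A ha⟩
  have hsN : s ∉ K ∪ {n} := by
    rintro (h | h)
    · exact hsK h
    · exact hsn h
  have hnN : n ∈ K ∪ {n} := Or.inr rfl
  have hr1 : reduct P1 (K ∪ {n}) = reduct P1 M1 := by
    apply reduct_congr
    intro a ha
    constructor
    · rintro (h | h)
      · rw [← hKA1]; exact ⟨h, ha⟩
      · cases h; exact absurd ha hnA1
    · intro h; exact Or.inl (hM1K h)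
  have hr2 : reduct P2 (K ∪ {n}) = reduct P2 K := by
    apply reduct_congr
    intro a ha
    constructor
    · rintro (h | h)
      · exact h
      · cases h; exact absurd ha hnA2
    · exact Or.inl
  have hredQ : reduct (P1 ∪ satProg s n P2) (K ∪ {n}) =
      reduct P1 M1 ∪ (reduct P2 K ∪ {(⟨some n, ∅, ∅⟩ : ARule α)}) := by
    rw [reduct_union, reduct_satProg_n hsN hnN, hr1, hr2]
  constructor
  · intro r' hr' hbt
    rw [hredQ] at hr'
    rcases hr' with hr' | hr' | hr'
    · obtain ⟨r, hr, hneg, rfl⟩ := hr'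
      have hpos : r.pos ⊆ M1 := by
        intro a ha
        rcases hbt.1 ha with h | h
        · rw [← hKA1]; exact ⟨h, pos_subset_progAtoms hr ha⟩
        · cases h; exact absurd (pos_subset_progAtoms hr ha) hnA1
      obtain ⟨h0, hh0, hh0M⟩ := hM1.1 _ ⟨r, hr, hneg, rfl⟩ (bodyTrue_empty_neg hpos)
      exact ⟨h0, hh0, Or.inl (hM1K hh0M)⟩
    · obtain ⟨r, hr, hneg, rfl⟩ := hr'
      have hpos : r.pos ⊆ K := by
        intro a ha
        rcases hbt.1 ha with h | h
        · exact h
        · cases h; exact absurd (pos_subset_progAtoms hr ha) hnA2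
      obtain ⟨h0, hh0, hh0K⟩ := hK.1 _ (by rw [hredK]; exact Or.inl ⟨r, hr, hneg, rfl⟩)
        (bodyTrue_empty_neg hpos)
      exact ⟨h0, hh0, Or.inl hh0K⟩
    · cases hr'
      exact ⟨n, rfl, Or.inr rfl⟩
  · intro J hJ hmod
    rw [hredQ] at hmod
    have hnJ : n ∈ J := by
      obtain ⟨h0, hh0, hh0J⟩ := hmod _ (Or.inr (Or.inr rfl)) (bodyTrue_empty_neg (by simp))
      cases hh0; exact hh0J
    rw [Set.ssubset_def] at hJ
    obtain ⟨hJsub, hJne⟩ := hJ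
    have hJA1sub : J ∩ A1 ⊆ M1 := by
      rintro a ⟨haJ, haA1⟩
      rcases hJsub haJ with h | h
      · rw [← hKA1]; exact ⟨h, haA1⟩
      · cases h; exact absurd haA1 hnA1
    have hJA1mod : isModel (J ∩ A1) (reduct P1 M1) := by
      rintro r' ⟨r, hr, hneg, rfl⟩ hbt
      have : bodyTrue J ⟨r.head, r.pos, ∅⟩ :=
        bodyTrue_empty_neg (fun a ha => (hbt.1 ha).1)
      obtain ⟨h0, hh0, hh0J⟩ := hmod _ (Or.inl ⟨r, hr, hneg, rfl⟩) this
      exact ⟨h0, hh0, hh0J, head_mem_progAtoms hr hh0⟩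
    have hJA1 : J ∩ A1 = M1 := by
      by_contra hne
      exact hM1.2 _ (Set.ssubset_iff_subset_ne.mpr ⟨hJA1sub, hne⟩) hJA1mod
    have hM1J : M1 ⊆ J := by
      intro a ha; rw [← hJA1] at ha; exact ha.1
    obtain ⟨x, hxN, hxJ⟩ := Set.not_subset.mp hJne
    have hxK : x ∈ K := by
      rcases hxN with h | h
      · exact h
      · cases h; exact absurd hnJ hxJ
    refine hK.2 (J \ {n}) ?_ ?_
    · rw [Set.ssubset_def]
      constructor
      · rintro a ⟨haJ, han⟩
        rcases hJsub haJ with h | h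
        · exact h
        · exact absurd h han
      · intro hle
        exact hxJ (hle hxK).1
    · rw [hredK]
      rintro r' (hr' | hr') hbt
      · obtain ⟨r, hr, hneg, rfl⟩ := hr'
        have : bodyTrue J ⟨r.head, r.pos, ∅⟩ :=
          bodyTrue_empty_neg (fun a ha => (hbt.1 ha).1)
        obtain ⟨h0, hh0, hh0J⟩ := hmod _ (Or.inr (Or.inl ⟨r, hr, hneg, rfl⟩)) this
        refine ⟨h0, hh0, hh0J, ?_⟩
        intro h
        cases h
        exact hnA2 (head_mem_progAtoms hr hh0)
      · rcases hr' with ⟨a, ha, rfl⟩ | ⟨a, ha, rfl⟩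
        · refine ⟨a, rfl, hM1J ha, ?_⟩
          intro h
          cases h
          exact hnA1 (hM1A ha)
        · exfalso
          have haJ : a ∈ J \ {n} := hbt.1 rfl
          have : a ∈ M1 := by rw [← hJA1]; exact ⟨haJ.1, ha.1⟩
          exact ha.2 this

end ASP

namespace ASP
variable {α : Type}

lemma not_both {P1 P2 : AProgram α} {s n : α} {N : Set α}
    (hs : s ∉ progAtoms P1)
    (hN : isAnswerSet (P1 ∪ satProg s n P2) N) (hsN : s ∈ N) (hnN : n ∈ N) :
    False := by
  have hredQ : reduct (P1 ∪ satProg s n P2) N = reduct P1 N := by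
    rw [reduct_union, reduct_satProg_both hsN hnN, Set.union_empty]
  refine hN.2 (N \ {s}) ?_ ?_
  · rw [Set.ssubset_def]
    exact ⟨Set.diff_subset, fun hle => (hle hsN).2 rfl⟩
  · rw [hredQ]
    rintro r' ⟨r, hr, hneg, rfl⟩ hbt
    have : bodyTrue N ⟨r.head, r.pos, ∅⟩ :=
      bodyTrue_empty_neg (fun a ha => (hbt.1 ha).1)
    obtain ⟨h0, hh0, hh0N⟩ := hN.1 _ (by rw [hredQ]; exact ⟨r, hr, hneg, rfl⟩) this
    refine ⟨h0, hh0, hh0N, ?_⟩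
    intro h; cases h
    exact hs (head_mem_progAtoms hr hh0)

lemma s_or_n {P1 P2 : AProgram α} {s n : α} {N : Set α}
    (hN : isAnswerSet (P1 ∪ satProg s n P2) N) (hsN : s ∉ N) : n ∈ N := by
  by_contra hnN
  have hmem : (⟨some s, ∅, ∅⟩ : ARule α) ∈ reduct (P1 ∪ satProg s n P2) N := by
    rw [reduct_union]
    exact Or.inr (not_s_rule_alive hnN)
  obtain ⟨h0, hh0, hh0N⟩ := hN.1 _ hmem (bodyTrue_empty_neg (by simp))
  cases hh0
  exact hsN hh0N

/-- Forward, sat case. -/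
lemma AS_s_dec {P1 P2 : AProgram α} {s n : α} {N : Set α}
    (hs : s ∉ progAtoms P1)
    (hN : isAnswerSet (P1 ∪ satProg s n P2) N) (hsN : s ∈ N) :
    n ∉ N ∧ isAnswerSet P1 (N \ {s}) ∧ N \ {s} ⊆ progAtoms P1 := by
  have hnN : n ∉ N := fun h => not_both hs hN hsN h
  have hredQ : reduct (P1 ∪ satProg s n P2) N =
      reduct P1 N ∪ {(⟨some s, ∅, ∅⟩ : ARule α)} := by
    rw [reduct_union, reduct_satProg_s hsN hnN]
  have hNh : N ⊆ heads P1 ∪ {s} := by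
    intro a ha
    have := answerSet_subset_heads_reduct hN ha
    rw [hredQ, heads_union] at this
    rcases this with h | h
    · exact Or.inl (heads_reduct_subset _ _ h)
    · obtain ⟨r, hr, hh⟩ := h
      cases hr
      cases hh
      exact Or.inr rfl
  have hM1A : N \ {s} ⊆ progAtoms P1 := by
    rintro a ⟨haN, has⟩
    rcases hNh haN with h | h
    · exact heads_subset_progAtoms P1 h
    · exact absurd h has
  have hr1 : reduct P1 N = reduct P1 (N \ {s}) := by
    apply reduct_congr
    intro a ha
    constructor
    · intro h; exact ⟨h, fun h' => (h' ▸ hs) ha⟩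
    · exact fun h => h.1
  refine ⟨hnN, ⟨?_, ?_⟩, hM1A⟩
  · rintro r' hr' hbt
    have : bodyTrue N r' := by
      obtain ⟨r, hr, hneg, rfl⟩ := hr'
      exact bodyTrue_empty_neg (fun a ha => (hbt.1 ha).1)
    obtain ⟨h0, hh0, hh0N⟩ := hN.1 r' (by rw [hredQ, hr1]; exact Or.inl hr') this
    obtain ⟨r, hr, hneg, rfl⟩ := hr'
    refine ⟨h0, hh0, hh0N, ?_⟩
    intro h; cases h
    exact hs (head_mem_progAtoms hr hh0)
  · intro J hJ hmod
    refine hN.2 (J ∪ {s}) ?_ ?_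
    · rw [Set.ssubset_def]
      rw [Set.ssubset_def] at hJ
      constructor
      · rintro a (h | h)
        · exact (hJ.1 h).1
        · cases h; exact hsN
      · intro hle
        obtain ⟨x, hxM, hxJ⟩ := Set.not_subset.mp hJ.2
        rcases hle hxM.1 with h | h
        · exact hxJ h
        · exact hxM.2 h
    · rw [hredQ, hr1]
      rintro r' (hr' | hr') hbt
      · obtain ⟨r, hr, hneg, rfl⟩ := hr'
        have hpos : r.pos ⊆ J := by
          intro a ha
          rcases hbt.1 ha with h | h
          · exact h
          · cases h
            exact absurd (pos_subset_progAtoms hr ha) hs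
        obtain ⟨h0, hh0, hh0J⟩ := hmod _ ⟨r, hr, hneg, rfl⟩ (bodyTrue_empty_neg hpos)
        exact ⟨h0, hh0, Or.inl hh0J⟩
      · cases hr'
        exact ⟨s, rfl, Or.inr rfl⟩

end ASP

namespace ASP
variable {α : Type}

/-- Forward, unsat case. -/
lemma AS_n_dec {P1 P2 : AProgram α} {s n : α} {N : Set α}
    (hheads : ∀ a ∈ heads P2, a ∉ progAtoms P1)
    (hs : s ∉ progAtoms P1 ∪ progAtoms P2) (hn : n ∉ progAtoms P1 ∪ progAtoms P2)
    (hN : isAnswerSet (P1 ∪ satProg s n P2) N) (hsN : s ∉ N) (hnN : n ∈ N) :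
    isAnswerSet P1 (N ∩ progAtoms P1) ∧
      isAnswerSet (P2 ∪ fixProg (progAtoms P1) (N ∩ progAtoms P1)) (N \ {n}) ∧
      (N \ {n}) \ progAtoms P1 ⊆ heads P2 := by
  set A1 := progAtoms P1 with hA1
  have hsA1 : s ∉ A1 := fun h => hs (Or.inl h)
  have hsA2 : s ∉ progAtoms P2 := fun h => hs (Or.inr h)
  have hnA1 : n ∉ A1 := fun h => hn (Or.inl h)
  have hnA2 : n ∉ progAtoms P2 := fun h => hn (Or.inr h)
  set M1 := N ∩ A1 with hM1def
  set K := N \ {n} with hKdef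
  have hredQ : reduct (P1 ∪ satProg s n P2) N =
      reduct P1 N ∪ (reduct P2 N ∪ {(⟨some n, ∅, ∅⟩ : ARule α)}) := by
    rw [reduct_union, reduct_satProg_n hsN hnN]
  have hNh : N ⊆ heads P1 ∪ (heads P2 ∪ {n}) := by
    intro a ha
    have := answerSet_subset_heads_reduct hN ha
    rw [hredQ, heads_union, heads_union] at this
    rcases this with h | h | h
    · exact Or.inl (heads_reduct_subset _ _ h)
    · exact Or.inr (Or.inl (heads_reduct_subset _ _ h))
    · obtain ⟨r, hr, hh⟩ := h
      cases hr; cases hh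
      exact Or.inr (Or.inr rfl)
  have hM1h : M1 ⊆ heads P1 := by
    rintro a ⟨haN, haA1⟩
    rcases hNh haN with h | h | h
    · exact h
    · exact absurd haA1 (hheads a h)
    · cases h; exact absurd haA1 hnA1
  have hr1 : reduct P1 N = reduct P1 M1 := by
    apply reduct_congr
    intro a ha
    exact ⟨fun h => ⟨h, ha⟩, fun h => h.1⟩
  have hr2 : reduct P2 N = reduct P2 K := by
    apply reduct_congr
    intro a ha
    exact ⟨fun h => ⟨h, fun h' => (h' ▸ hnA2) ha⟩, fun h => h.1⟩
  -- M1 is an answer set of P1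
  have hM1AS : isAnswerSet P1 M1 := by
    constructor
    · rintro r' hr' hbt
      have : bodyTrue N r' := by
        obtain ⟨r, hr, hneg, rfl⟩ := hr'
        exact bodyTrue_empty_neg (fun a ha => (hbt.1 ha).1)
      obtain ⟨h0, hh0, hh0N⟩ := hN.1 r' (by rw [hredQ, hr1]; exact Or.inl hr') this
      obtain ⟨r, hr, hneg, rfl⟩ := hr'
      exact ⟨h0, hh0, hh0N, head_mem_progAtoms hr hh0⟩
    · intro J hJ hmod
      rw [Set.ssubset_def] at hJ
      obtain ⟨hJsub, hJne⟩ := hJ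
      obtain ⟨x, hxM, hxJ⟩ := Set.not_subset.mp hJne
      refine hN.2 (J ∪ (N \ A1)) ?_ ?_
      · rw [Set.ssubset_def]
        constructor
        · rintro a (h | h)
          · exact (hJsub h).1
          · exact h.1
        · intro hle
          rcases hle hxM.1 with h | h
          · exact hxJ h
          · exact h.2 hxM.2
      · rw [hredQ, hr1]
        rintro r' (hr' | hr' | hr') hbt
        · obtain ⟨r, hr, hneg, rfl⟩ := hr'
          have hpos : r.pos ⊆ J := by
            intro a ha
            rcases hbt.1 ha with h | h
            · exact h
            · exact absurd (pos_subset_progAtoms hr ha) h.2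
          obtain ⟨h0, hh0, hh0J⟩ := hmod _ ⟨r, hr, hneg, rfl⟩ (bodyTrue_empty_neg hpos)
          exact ⟨h0, hh0, Or.inl hh0J⟩
        · obtain ⟨r, hr, hneg, rfl⟩ := hr'
          have hpos : r.pos ⊆ N := by
            intro a ha
            rcases hbt.1 ha with h | h
            · exact (hJsub h).1
            · exact h.1
          obtain ⟨h0, hh0, hh0N⟩ := hN.1 _
            (by rw [hredQ, hr1]; exact Or.inr (Or.inl ⟨r, hr, hneg, rfl⟩))
            (bodyTrue_empty_neg hpos)
          have : h0 ∉ A1 := hheads h0 ⟨r, hr, hh0⟩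
          exact ⟨h0, hh0, Or.inr ⟨hh0N, this⟩⟩
        · cases hr'
          exact ⟨n, rfl, Or.inr ⟨hnN, hnA1⟩⟩
  have hKA1 : K ∩ A1 = M1 := by
    ext a
    constructor
    · rintro ⟨⟨haN, _⟩, haA1⟩; exact ⟨haN, haA1⟩
    · rintro ⟨haN, haA1⟩
      exact ⟨⟨haN, fun h => (h ▸ hnA1) haA1⟩, haA1⟩
  have hredK : reduct (P2 ∪ fixProg A1 M1) K = reduct P2 K ∪ fixProg A1 M1 := by
    rw [reduct_union, reduct_fixProg]
  refine ⟨hM1AS, ⟨?_, ?_⟩, ?_⟩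
  · rw [hredK]
    rintro r' (hr' | hr') hbt
    · obtain ⟨r, hr, hneg, rfl⟩ := hr'
      have hpos : r.pos ⊆ N := fun a ha => ((hbt.1 ha).1 : a ∈ N)
      obtain ⟨h0, hh0, hh0N⟩ := hN.1 _
        (by rw [hredQ, hr2]; exact Or.inr (Or.inl ⟨r, hr, hneg, rfl⟩))
        (bodyTrue_empty_neg hpos)
      refine ⟨h0, hh0, hh0N, ?_⟩
      intro h; cases h
      exact hnA2 (head_mem_progAtoms hr hh0)
    · rcases hr' with ⟨a, ha, rfl⟩ | ⟨a, ha, rfl⟩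
      · exact ⟨a, rfl, ha.1, fun h => (h ▸ hnA1) ha.2⟩
      · exfalso
        have haK : a ∈ K := hbt.1 rfl
        exact ha.2 ⟨haK.1, ha.1⟩
  · intro J hJ hmod
    rw [hredK] at hmod
    have hM1J : M1 ⊆ J := by
      rintro a ha
      obtain ⟨h0, hh0, hh0J⟩ := hmod (⟨some a, ∅, ∅⟩ : ARule α)
        (Or.inr (Or.inl ⟨a, ha, rfl⟩)) (bodyTrue_empty_neg (by simp))
      cases hh0; exact hh0J
    rw [Set.ssubset_def] at hJ
    obtain ⟨hJsub, hJne⟩ := hJ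
    obtain ⟨x, hxK, hxJ⟩ := Set.not_subset.mp hJne
    refine hN.2 (J ∪ {n}) ?_ ?_
    · rw [Set.ssubset_def]
      constructor
      · rintro a (h | h)
        · exact (hJsub h).1
        · cases h; exact hnN
      · intro hle
        rcases hle hxK.1 with h | h
        · exact hxJ h
        · exact hxK.2 h
    · rw [hredQ, hr1, hr2]
      rintro r' (hr' | hr' | hr') hbt
      · obtain ⟨r, hr, hneg, rfl⟩ := hr'
        have hpos : r.pos ⊆ M1 := by
          intro a ha
          have haA1 : a ∈ A1 := pos_subset_progAtoms hr ha
          rcases hbt.1 ha with h | h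
          · rw [← hKA1]; exact ⟨hJsub h, haA1⟩
          · cases h; exact absurd haA1 hnA1
        obtain ⟨h0, hh0, hh0M⟩ := hM1AS.1 _ ⟨r, hr, hneg, rfl⟩ (bodyTrue_empty_neg hpos)
        exact ⟨h0, hh0, Or.inl (hM1J hh0M)⟩
      · obtain ⟨r, hr, hneg, rfl⟩ := hr'
        have hpos : r.pos ⊆ J := by
          intro a ha
          rcases hbt.1 ha with h | h
          · exact h
          · cases h; exact absurd (pos_subset_progAtoms hr ha) hnA2
        obtain ⟨h0, hh0, hh0J⟩ := hmod _ (Or.inl ⟨r, hr, hneg, rfl⟩) (bodyTrue_empty_neg hpos)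
        exact ⟨h0, hh0, Or.inl hh0J⟩
      · cases hr'
        exact ⟨n, rfl, Or.inr rfl⟩
  · rintro a ⟨haK, haA1⟩
    rcases hNh haK.1 with h | h | h
    · exact absurd (heads_subset_progAtoms P1 h) haA1
    · exact h
    · exact absurd h haK.2

end ASP

namespace ASP
variable {α : Type}


lemma cost_congr {A1 : Set α} (W1 : Finset (WeakC α))
    (hW1 : ∀ w ∈ W1, WeakC.atoms w ⊆ A1) {I J : Set α}
    (h : I ∩ A1 = J ∩ A1) (l : ℤ) : cost W1 I l = cost W1 J l := by
  unfold cost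
  have hfil : W1.filter (fun w => w.level = l ∧ WeakC.violated w I) =
      W1.filter (fun w => w.level = l ∧ WeakC.violated w J) := by
    apply Finset.filter_congr
    intro w hw
    have hat := hW1 w hw
    have hmem : ∀ a ∈ WeakC.atoms w, (a ∈ I ↔ a ∈ J) := by
      intro a ha
      constructor
      · intro hx
        have : a ∈ J ∩ A1 := h ▸ (⟨hx, hat ha⟩ : a ∈ I ∩ A1)
        exact this.1
      · intro hx
        have : a ∈ I ∩ A1 := h.symm ▸ (⟨hx, hat ha⟩ : a ∈ J ∩ A1)
        exact this.1
    constructor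
    · rintro ⟨hl, h1, h2⟩
      exact ⟨hl, fun a ha => (hmem a (Or.inl ha)).mp (h1 ha),
        fun a ha haJ => h2 a ha ((hmem a (Or.inr ha)).mpr haJ)⟩
    · rintro ⟨hl, h1, h2⟩
      exact ⟨hl, fun a ha => (hmem a (Or.inl ha)).mpr (h1 ha),
        fun a ha haI => h2 a ha ((hmem a (Or.inr ha)).mp haI)⟩
  rw [hfil]

lemma proj_AS {P1 P2 : AProgram α} {s n : α} {N : Set α}
    (hheads : ∀ a ∈ heads P2, a ∉ progAtoms P1)
    (hs : s ∉ progAtoms P1 ∪ progAtoms P2) (hn : n ∉ progAtoms P1 ∪ progAtoms P2)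
    (hN : isAnswerSet (P1 ∪ satProg s n P2) N) :
    isAnswerSet P1 (N ∩ progAtoms P1) := by
  have hsA1 : s ∉ progAtoms P1 := fun h => hs (Or.inl h)
  by_cases hsN : s ∈ N
  · obtain ⟨hnN, hAS, hsub⟩ := AS_s_dec hsA1 hN hsN
    have heq : N ∩ progAtoms P1 = N \ {s} := by
      apply Set.Subset.antisymm
      · rintro a ⟨haN, haA⟩
        exact ⟨haN, fun h => (h ▸ hsA1) haA⟩
      · intro a ha
        exact ⟨ha.1, hsub ha⟩
    rw [heq]
    exact hAS
  · exact (AS_n_dec hheads hs hn hN hsN (s_or_n hN hsN)).1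

end ASP

namespace ASP
variable {α : Type}

lemma opt_proj {P1 P2 : AProgram α} {s n : α} {N : Set α} {W1 : Finset (WeakC α)}
    (hheads : ∀ a ∈ heads P2, a ∉ progAtoms P1)
    (hW1 : ∀ w ∈ W1, WeakC.atoms w ⊆ progAtoms P1)
    (hs : s ∉ progAtoms P1 ∪ progAtoms P2) (hn : n ∉ progAtoms P1 ∪ progAtoms P2)
    (hsn : s ≠ n) (hN : optAS (P1 ∪ satProg s n P2) W1 N) :
    optAS P1 W1 (N ∩ progAtoms P1) := by
  have hsA1 : s ∉ progAtoms P1 := fun h => hs (Or.inl h)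
  have hnA1 : n ∉ progAtoms P1 := fun h => hn (Or.inl h)
  refine ⟨proj_AS hheads hs hn hN.1, ?_⟩
  intro M1' hM1' hdom
  have hM1'A : M1' ⊆ progAtoms P1 :=
    (answerSet_subset_heads hM1').trans (heads_subset_progAtoms P1)
  apply hN.2 (M1' ∪ {s}) (AS_s_case hsA1 hnA1 hsn hM1')
  have hc1 : ∀ l, cost W1 N l = cost W1 (N ∩ progAtoms P1) l := by
    intro l
    exact cost_congr W1 hW1 (by rw [Set.inter_assoc, Set.inter_self]) l
  have hc2 : ∀ l, cost W1 (M1' ∪ {s}) l = cost W1 M1' l := by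
    intro l
    apply cost_congr W1 hW1
    apply Set.Subset.antisymm
    · rintro a ⟨(h | h), ha⟩
      · exact ⟨h, ha⟩
      · cases h; exact absurd ha hsA1
    · rintro a ⟨h, ha⟩
      exact ⟨Or.inl h, ha⟩
  obtain ⟨l, h1, h2⟩ := hdom
  exact ⟨l, by rw [hc1, hc2]; exact h1, fun l' hl' => by rw [hc1, hc2]; exact h2 l' hl'⟩

lemma opt_lift {P1 P2 : AProgram α} {s n : α} {N M1 : Set α} {W1 : Finset (WeakC α)}
    (hheads : ∀ a ∈ heads P2, a ∉ progAtoms P1)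
    (hW1 : ∀ w ∈ W1, WeakC.atoms w ⊆ progAtoms P1)
    (hs : s ∉ progAtoms P1 ∪ progAtoms P2) (hn : n ∉ progAtoms P1 ∪ progAtoms P2)
    (hAS : isAnswerSet (P1 ∪ satProg s n P2) N) (heq : N ∩ progAtoms P1 = M1)
    (hopt : optAS P1 W1 M1) : optAS (P1 ∪ satProg s n P2) W1 N := by
  refine ⟨hAS, ?_⟩
  intro N' hN' hdom
  apply hopt.2 (N' ∩ progAtoms P1) (proj_AS hheads hs hn hN')
  have hc : ∀ (I : Set α) l, cost W1 I l = cost W1 (I ∩ progAtoms P1) l := by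
    intro I l
    exact cost_congr W1 hW1 (by rw [Set.inter_assoc, Set.inter_self]) l
  obtain ⟨l, h1, h2⟩ := hdom
  refine ⟨l, ?_, ?_⟩
  · rw [← heq, ← hc, ← hc]; exact h1
  · intro l' hl'; rw [← heq, ← hc, ← hc]; exact h2 l' hl'

end ASP

open ASP in
/-- optimal answer sets of `P1 ∪ W1 ∪ sat(P2)` (up to the hidden
atom `n` = nsat) decompose as `M1 ∪ M2` with `M1` an optimal answer set of
`P1 ∪ W1` and `M2 ⊆ heads(sat(P2))` either `{s}` or such that `M1 ∪ M2` is an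
answer set of `P2 ∪ fix_{P1}(M1)`. -/
theorem union_sat_optimal_answer_sets {α : Type} (P1 P2 : AProgram α)
    (hfin1 : P1.Finite) (hfin2 : P2.Finite) (W1 : Finset (WeakC α)) (s n : α)
    (hheads : ∀ a ∈ heads P2, a ∉ progAtoms P1)
    (hW1 : ∀ w ∈ W1, WeakC.atoms w ⊆ progAtoms P1)
    (hs : s ∉ progAtoms P1 ∪ progAtoms P2) (hn : n ∉ progAtoms P1 ∪ progAtoms P2)
    (hsn : s ≠ n) (M : Set α) :
    (∃ N, optAS (P1 ∪ satProg s n P2) W1 N ∧ M = N \ {n}) ↔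
      ∃ M1 M2, M = M1 ∪ M2 ∧ optAS P1 W1 M1 ∧ M2 ⊆ heads (satProg s n P2) ∧
        (M2 = {s} ∨ isAnswerSet (P2 ∪ fixProg (progAtoms P1) M1) (M1 ∪ M2)) := by
  have hsA1 : s ∉ progAtoms P1 := fun h => hs (Or.inl h)
  have hnA1 : n ∉ progAtoms P1 := fun h => hn (Or.inl h)
  have hnA2 : n ∉ progAtoms P2 := fun h => hn (Or.inr h)
  constructor
  · rintro ⟨N, hNopt, rfl⟩
    by_cases hsN : s ∈ N
    · obtain ⟨hnN, hM1AS, hM1A⟩ := AS_s_dec hsA1 hNopt.1 hsN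
      have hNA1 : N ∩ progAtoms P1 = N \ {s} := by
        apply Set.Subset.antisymm
        · rintro a ⟨haN, haA⟩
          exact ⟨haN, fun h => (h ▸ hsA1) haA⟩
        · intro a ha
          exact ⟨ha.1, hM1A ha⟩
      refine ⟨N \ {s}, {s}, ?_, ?_, ?_, Or.inl rfl⟩
      · ext a
        constructor
        · rintro ⟨haN, han⟩
          by_cases h : a = s
          · exact Or.inr h
          · exact Or.inl ⟨haN, h⟩
        · rintro (⟨haN, _⟩ | h)
          · exact ⟨haN, fun h' => hnN (h' ▸ haN)⟩
          · exact ⟨h ▸ hsN, fun h' => hsn ((h : a = s) ▸ (h' : a = n))⟩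
      · have := opt_proj hheads hW1 hs hn hsn hNopt
        rw [hNA1] at this
        exact this
      · rintro a ha
        exact (ha : a = s) ▸ s_mem_heads_satProg s n P2
    · have hnN := s_or_n hNopt.1 hsN
      obtain ⟨hM1AS, hKAS, hKsub⟩ := AS_n_dec hheads hs hn hNopt.1 hsN hnN
      have hunion : (N ∩ progAtoms P1) ∪ ((N \ {n}) \ progAtoms P1) = N \ {n} := by
        ext a
        constructor
        · rintro (⟨haN, haA⟩ | h)
          · exact ⟨haN, fun h' => (h' ▸ hnA1) haA⟩
          · exact h.1
        · intro h
          by_cases hA : a ∈ progAtoms P1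
          · exact Or.inl ⟨h.1, hA⟩
          · exact Or.inr ⟨h, hA⟩
      refine ⟨N ∩ progAtoms P1, (N \ {n}) \ progAtoms P1, hunion.symm,
        opt_proj hheads hW1 hs hn hsn hNopt,
        hKsub.trans (heads_subset_heads_satProg s n P2), Or.inr ?_⟩
      rw [hunion]
      exact hKAS
  · rintro ⟨M1, M2, rfl, hM1opt, hM2h, hM2 | hKAS⟩
    · subst hM2
      have hM1A : M1 ⊆ progAtoms P1 :=
        (answerSet_subset_heads hM1opt.1).trans (heads_subset_progAtoms P1)
      have hASN : isAnswerSet (P1 ∪ satProg s n P2) (M1 ∪ {s}) :=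
        AS_s_case hsA1 hnA1 hsn hM1opt.1
      have hinter : (M1 ∪ {s}) ∩ progAtoms P1 = M1 := by
        apply Set.Subset.antisymm
        · rintro a ⟨(h | h), ha⟩
          · exact h
          · exact absurd ha ((h : a = s) ▸ hsA1)
        · intro a ha
          exact ⟨Or.inl ha, hM1A ha⟩
      refine ⟨M1 ∪ {s}, opt_lift hheads hW1 hs hn hASN hinter hM1opt, ?_⟩
      rw [Set.diff_singleton_eq_self]
      rintro (h | h)
      · exact hnA1 (hM1A h)
      · exact hsn ((h : n = s)).symm
    · have hM1A : M1 ⊆ progAtoms P1 :=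
        (answerSet_subset_heads hM1opt.1).trans (heads_subset_progAtoms P1)
      have hKh : M1 ∪ M2 ⊆ heads P2 ∪ M1 := by
        intro a ha
        have := answerSet_subset_heads hKAS ha
        rw [heads_union, heads_fixProg] at this
        exact this
      have hnK : n ∉ M1 ∪ M2 := by
        intro h
        rcases hKh h with h | h
        · exact hnA2 (heads_subset_progAtoms P2 h)
        · exact hnA1 (hM1A h)
      have hASN : isAnswerSet (P1 ∪ satProg s n P2) ((M1 ∪ M2) ∪ {n}) :=
        AS_n_case hheads hs hn hsn hM1opt.1 hKAS
      have hinter : ((M1 ∪ M2) ∪ {n}) ∩ progAtoms P1 = M1 := by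
        apply Set.Subset.antisymm
        · rintro a ⟨(h | h), ha⟩
          · rcases hKh h with h' | h'
            · exact absurd ha (hheads a h')
            · exact h'
          · exact absurd ha ((h : a = n) ▸ hnA1)
        · intro a ha
          exact ⟨Or.inl (Or.inl ha), hM1A ha⟩
      refine ⟨(M1 ∪ M2) ∪ {n}, opt_lift hheads hW1 hs hn hASN hinter hM1opt, ?_⟩
      have : ((M1 ∪ M2) ∪ {n}) \ {n} = M1 ∪ M2 := by
        ext a
        constructor
        · rintro ⟨(h | h), hn'⟩
          · exact h
          · exact absurd h hn'
        · intro h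
          exact ⟨Or.inl h, fun h' => hnK ((h' : a = n) ▸ h)⟩
      rw [this]
end
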